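/- arXiv:2008.08152 — 3 statements merged into one kernel-verified Lean document; each statement's English description precedes it below -/
import Mathlib

section
/- In the ODE SEAIR model, if the initial data S(0), E(0), A(0), I(0), R(0) are nonnegative with N(0) > 0, then S(t), E(t), A(t), I(t), R(t) remain nonnegative for all t ≥ 0. -/
open Set Filter Topology

/-- Auxiliary contradiction lemma: if `f ≥ -g`, `g` has right derivative `d` at `x`,
and frequently to the right of `x` the slope of `f` is ≥ r while `f = -g` there,
but `-d < r` whenever `g` is "active" at `x`, we get a contradiction. -/
lemma seair_slope_aux {f g : ℝ → ℝ} {x d r : ℝ} (hx : 0 ≤ x)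
    (hg : HasDerivWithinAt g d (Ici 0) x)
    (hfg : ∀ z, -g z ≤ f z)
    (hfcont : ContinuousWithinAt f (Ici 0) x)
    (hd : f x = -g x → -d < r)
    (hfreq : ∃ᶠ z in 𝓝[>] x, f z = -g z ∧ r ≤ (z - x)⁻¹ * (f z - f x)) :
    False := by
  have hsub0 : Ioi x ⊆ Ici (0:ℝ) := fun z hz => hx.trans hz.le
  have hsub : Ioi x ⊆ Ici (0:ℝ) \ {x} := fun z hz => ⟨hsub0 hz, ne_of_gt hz⟩
  have hle : 𝓝[>] x ≤ 𝓝[Ici (0:ℝ) \ {x}] x := nhdsWithin_mono _ hsub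
  have hle0 : 𝓝[>] x ≤ 𝓝[Ici (0:ℝ)] x := nhdsWithin_mono _ hsub0
  have hgc : ContinuousWithinAt g (Ici 0) x := hg.continuousWithinAt
  -- g is active at x
  have hsum : Tendsto (fun z => f z + g z) (𝓝[>] x) (𝓝 (f x + g x)) :=
    Tendsto.mono_left (hfcont.add hgc) hle0
  have heq : f x + g x = 0 := by
    refine tendsto_nhds_unique_of_frequently_eq hsum tendsto_const_nhds ?_
    exact hfreq.mono fun z hz => by linarith [hz.1]
  have hfx : f x = -g x := by linarith
  have hdr : -r < d := by have := hd hfx; linarith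
  have hslope : Tendsto (slope g x) (𝓝[>] x) (𝓝 d) :=
    (hasDerivWithinAt_iff_tendsto_slope.mp hg).mono_left hle
  have hev : ∀ᶠ z in 𝓝[>] x, -r < slope g x z :=
    hslope.eventually (eventually_gt_nhds hdr)
  obtain ⟨z, ⟨hz1, hz2⟩, hz3, hz4⟩ :=
    (hfreq.and_eventually (hev.and self_mem_nhdsWithin)).exists
  have hzx : x < z := hz4
  have hne : z - x ≠ 0 := sub_ne_zero.mpr hzx.ne'
  have hval : (z - x)⁻¹ * (f z - f x) = -(slope g x z) := by
    rw [slope_def_field, hz1, hfx]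
    field_simp
    ring
  rw [hval] at hz2
  linarith

set_option maxHeartbeats 1000000 in
open Set in
/-- In the SEAIR ODE model, nonnegative initial data with positive total population
yield nonnegative components for all `t ≥ 0`. -/
theorem seair_nonneg_invariant
    (β ξ σ θ γA γI : ℝ) (hβ : 0 < β) (hξ : 0 < ξ) (hσ : 0 < σ)
    (hγA : 0 < γA) (hγI : 0 < γI) (hθ0 : 0 ≤ θ) (hθ1 : θ ≤ 1)
    (S E A I R : ℝ → ℝ)
    (hS : ∀ t ∈ Ici (0:ℝ), HasDerivWithinAt S
      (-(β * S t * (I t + ξ * A t) / (S t + E t + A t + I t + R t))) (Ici 0) t)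
    (hE : ∀ t ∈ Ici (0:ℝ), HasDerivWithinAt E
      (β * S t * (I t + ξ * A t) / (S t + E t + A t + I t + R t) - σ * E t) (Ici 0) t)
    (hA : ∀ t ∈ Ici (0:ℝ), HasDerivWithinAt A ((1 - θ) * σ * E t - γA * A t) (Ici 0) t)
    (hI : ∀ t ∈ Ici (0:ℝ), HasDerivWithinAt I (θ * σ * E t - γI * I t) (Ici 0) t)
    (hR : ∀ t ∈ Ici (0:ℝ), HasDerivWithinAt R (γA * A t + γI * I t) (Ici 0) t)
    (hS0 : 0 ≤ S 0) (hE0 : 0 ≤ E 0) (hA0 : 0 ≤ A 0) (hI0 : 0 ≤ I 0) (hR0 : 0 ≤ R 0)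
    (hN0 : 0 < S 0 + E 0 + A 0 + I 0 + R 0) :
    ∀ t ∈ Ici (0:ℝ), 0 ≤ S t ∧ 0 ≤ E t ∧ 0 ≤ A t ∧ 0 ≤ I t ∧ 0 ≤ R t := by
  have hScont : ContinuousOn S (Ici 0) := fun x hx => (hS x hx).continuousWithinAt
  have hEcont : ContinuousOn E (Ici 0) := fun x hx => (hE x hx).continuousWithinAt
  have hAcont : ContinuousOn A (Ici 0) := fun x hx => (hA x hx).continuousWithinAt
  have hIcont : ContinuousOn I (Ici 0) := fun x hx => (hI x hx).continuousWithinAt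
  have hRcont : ContinuousOn R (Ici 0) := fun x hx => (hR x hx).continuousWithinAt
  set N0 : ℝ := S 0 + E 0 + A 0 + I 0 + R 0 with hN0def
  -- total population is constant
  have hNconst : ∀ t ∈ Ici (0:ℝ), S t + E t + A t + I t + R t = N0 := by
    intro t ht
    have hcont : ContinuousOn (fun z => S z + E z + A z + I z + R z) (Icc 0 t) :=
      ((((hScont.add hEcont).add hAcont).add hIcont).add hRcont).mono Icc_subset_Ici_self
    have hderiv : ∀ x ∈ Ico (0:ℝ) t,
        HasDerivWithinAt (fun z => S z + E z + A z + I z + R z) 0 (Ici x) x := by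
      intro x hx
      have hx0 : x ∈ Ici (0:ℝ) := hx.1
      have hsum := ((((hS x hx0).add (hE x hx0)).add (hA x hx0)).add (hI x hx0)).add (hR x hx0)
      have h0 : -(β * S x * (I x + ξ * A x) / (S x + E x + A x + I x + R x)) +
          (β * S x * (I x + ξ * A x) / (S x + E x + A x + I x + R x) - σ * E x) +
          ((1 - θ) * σ * E x - γA * A x) + (θ * σ * E x - γI * I x) +
          (γA * A x + γI * I x) = 0 := by ring
      rw [h0] at hsum
      exact hsum.mono (Ici_subset_Ici.mpr hx.1)
    have := constant_of_has_deriv_right_zero hcont hderiv t (by exact ⟨ht, le_rfl⟩)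
    simpa using this
  intro t₀ ht₀
  have hIccsub : Icc (0:ℝ) t₀ ⊆ Ici 0 := Icc_subset_Ici_self
  -- bound on the components on [0, t₀]
  obtain ⟨MS, hMS⟩ := isCompact_Icc.exists_bound_of_continuousOn (hScont.mono hIccsub)
  obtain ⟨ME, hME⟩ := isCompact_Icc.exists_bound_of_continuousOn (hEcont.mono hIccsub)
  obtain ⟨MA, hMA⟩ := isCompact_Icc.exists_bound_of_continuousOn (hAcont.mono hIccsub)
  obtain ⟨MI, hMI⟩ := isCompact_Icc.exists_bound_of_continuousOn (hIcont.mono hIccsub)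
  obtain ⟨MR, hMR⟩ := isCompact_Icc.exists_bound_of_continuousOn (hRcont.mono hIccsub)
  set M : ℝ := max 1 (max MS (max ME (max MA (max MI MR)))) with hMdef
  have hM1 : (1:ℝ) ≤ M := le_max_left _ _
  have hMpos : (0:ℝ) < M := by linarith
  have hMS' : ∀ x ∈ Icc (0:ℝ) t₀, |S x| ≤ M := fun x hx =>
    (hMS x hx).trans ((le_max_left _ _).trans (le_max_right _ _))
  have hME' : ∀ x ∈ Icc (0:ℝ) t₀, |E x| ≤ M := fun x hx =>
    (hME x hx).trans (((le_max_left _ _).trans (le_max_right _ _)).trans (le_max_right _ _))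
  have hMA' : ∀ x ∈ Icc (0:ℝ) t₀, |A x| ≤ M := fun x hx =>
    (hMA x hx).trans ((((le_max_left _ _).trans (le_max_right _ _)).trans
      (le_max_right _ _)).trans (le_max_right _ _))
  have hMI' : ∀ x ∈ Icc (0:ℝ) t₀, |I x| ≤ M := fun x hx =>
    (hMI x hx).trans (((((le_max_left _ _).trans (le_max_right _ _)).trans
      (le_max_right _ _)).trans (le_max_right _ _)).trans (le_max_right _ _))
  have hMR' : ∀ x ∈ Icc (0:ℝ) t₀, |R x| ≤ M := fun x hx =>
    (hMR x hx).trans (((((le_max_right _ _).trans (le_max_right _ _)).trans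
      (le_max_right _ _)).trans (le_max_right _ _)).trans (le_max_right _ _))
  -- the barrier function
  set f : ℝ → ℝ := fun z => max 0 (max (-S z) (max (-E z) (max (-A z) (max (-I z) (-R z)))))
    with hfdef
  set K : ℝ := β * (1 + ξ) * M / N0 + σ + γA + γI with hKdef
  have hKpos : 0 < K := by
    have : 0 < β * (1 + ξ) * M / N0 := by positivity
    simp only [hKdef]; linarith
  have hf0 : ∀ z, 0 ≤ f z := fun z => le_max_left _ _
  have hfS : ∀ z, -S z ≤ f z := fun z => (le_max_left _ _).trans (le_max_right _ _)
  have hfE : ∀ z, -E z ≤ f z := fun z =>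
    ((le_max_left _ _).trans (le_max_right _ _)).trans (le_max_right _ _)
  have hfA : ∀ z, -A z ≤ f z := fun z =>
    (((le_max_left _ _).trans (le_max_right _ _)).trans (le_max_right _ _)).trans
      (le_max_right _ _)
  have hfI : ∀ z, -I z ≤ f z := fun z =>
    ((((le_max_left _ _).trans (le_max_right _ _)).trans (le_max_right _ _)).trans
      (le_max_right _ _)).trans (le_max_right _ _)
  have hfR : ∀ z, -R z ≤ f z := fun z =>
    ((((le_max_right _ _).trans (le_max_right _ _)).trans (le_max_right _ _)).trans
      (le_max_right _ _)).trans (le_max_right _ _)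
  have hfcontW : ∀ x ∈ Ici (0:ℝ), ContinuousWithinAt f (Ici 0) x := by
    intro x hx
    exact continuousWithinAt_const.sup (((hScont x hx).neg).sup
      (((hEcont x hx).neg).sup (((hAcont x hx).neg).sup
        (((hIcont x hx).neg).sup ((hRcont x hx).neg)))))
  have hfcont : ContinuousOn f (Icc 0 t₀) :=
    fun x hx => (hfcontW x (hIccsub hx)).mono hIccsub
  have hfzero : f 0 ≤ 0 := by
    simp only [hfdef]
    refine max_le le_rfl (max_le (by linarith) (max_le (by linarith)
      (max_le (by linarith) (max_le (by linarith) (by linarith)))))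
  have hmaxcases : ∀ z : ℝ,
      f z = 0 ∨ f z = -S z ∨ f z = -E z ∨ f z = -A z ∨ f z = -I z ∨ f z = -R z := by
    intro z
    simp only [hfdef]
    rcases max_choice (0:ℝ) (max (-S z) (max (-E z) (max (-A z) (max (-I z) (-R z))))) with
      h1 | h1
    · exact Or.inl h1
    rw [h1]
    rcases max_choice (-S z) (max (-E z) (max (-A z) (max (-I z) (-R z)))) with h2 | h2
    · exact Or.inr (Or.inl h2)
    rw [h2]
    rcases max_choice (-E z) (max (-A z) (max (-I z) (-R z))) with h3 | h3
    · exact Or.inr (Or.inr (Or.inl h3))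
    rw [h3]
    rcases max_choice (-A z) (max (-I z) (-R z)) with h4 | h4
    · exact Or.inr (Or.inr (Or.inr (Or.inl h4)))
    rw [h4]
    rcases max_choice (-I z) (-R z) with h5 | h5
    · exact Or.inr (Or.inr (Or.inr (Or.inr (Or.inl h5))))
    · rw [h5]; exact Or.inr (Or.inr (Or.inr (Or.inr (Or.inr rfl))))
  -- main slope estimate
  have hf' : ∀ x ∈ Ico (0:ℝ) t₀, ∀ r, K * f x < r →
      ∃ᶠ z in 𝓝[>] x, (z - x)⁻¹ * (f z - f x) < r := by
    intro x hx r hr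
    by_contra hcon
    rw [Filter.not_frequently] at hcon
    have hev : ∀ᶠ z in 𝓝[>] x, r ≤ (z - x)⁻¹ * (f z - f x) :=
      hcon.mono fun z hz => not_lt.mp hz
    have hx0 : x ∈ Ici (0:ℝ) := hx.1
    have hxIcc : x ∈ Icc (0:ℝ) t₀ := ⟨hx.1, hx.2.le⟩
    have hNx : S x + E x + A x + I x + R x = N0 := hNconst x hx0
    have hφ : 0 ≤ f x := hf0 x
    have hSx : -(f x) ≤ S x := by linarith [hfS x]
    have hEx : -(f x) ≤ E x := by linarith [hfE x]
    have hAx : -(f x) ≤ A x := by linarith [hfA x]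
    have hIx : -(f x) ≤ I x := by linarith [hfI x]
    have hRx : -(f x) ≤ R x := by linarith [hfR x]
    have hSM := abs_le.mp (hMS' x hxIcc)
    have hEM := abs_le.mp (hME' x hxIcc)
    have hAM := abs_le.mp (hMA' x hxIcc)
    have hIM := abs_le.mp (hMI' x hxIcc)
    have hRM := abs_le.mp (hMR' x hxIcc)
    have hKfN : K * f x * N0 = β * (1 + ξ) * M * f x + (σ + γA + γI) * f x * N0 := by
      rw [hKdef]
      field_simp [hKdef]
      ring
    have hfcx : ContinuousWithinAt f (Ici 0) x := hfcontW x hx0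
    -- pigeonhole over the six components
    have hbig : ∀ᶠ z in 𝓝[>] x,
        (f z = 0 ∧ r ≤ (z - x)⁻¹ * (f z - f x)) ∨
        (f z = -S z ∧ r ≤ (z - x)⁻¹ * (f z - f x)) ∨
        (f z = -E z ∧ r ≤ (z - x)⁻¹ * (f z - f x)) ∨
        (f z = -A z ∧ r ≤ (z - x)⁻¹ * (f z - f x)) ∨
        (f z = -I z ∧ r ≤ (z - x)⁻¹ * (f z - f x)) ∨
        (f z = -R z ∧ r ≤ (z - x)⁻¹ * (f z - f x)) := by
      refine hev.mono fun z hz => ?_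
      rcases hmaxcases z with h | h | h | h | h | h
      · exact Or.inl ⟨h, hz⟩
      · exact Or.inr (Or.inl ⟨h, hz⟩)
      · exact Or.inr (Or.inr (Or.inl ⟨h, hz⟩))
      · exact Or.inr (Or.inr (Or.inr (Or.inl ⟨h, hz⟩)))
      · exact Or.inr (Or.inr (Or.inr (Or.inr (Or.inl ⟨h, hz⟩))))
      · exact Or.inr (Or.inr (Or.inr (Or.inr (Or.inr ⟨h, hz⟩))))
    have hfreq := hbig.frequently
    rw [Filter.frequently_or_distrib] at hfreq
    rcases hfreq with hfr | hfreq
    · -- zero component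
      refine seair_slope_aux (g := fun _ => (0:ℝ)) (d := 0) hx.1
        (hasDerivWithinAt_const x _ 0) (fun z => by simpa using hf0 z) hfcx
        (fun _ => by simpa using lt_of_le_of_lt (mul_nonneg hKpos.le hφ) hr) ?_
      exact hfr.mono fun z hz => ⟨by simpa using hz.1, hz.2⟩
    rw [Filter.frequently_or_distrib] at hfreq
    rcases hfreq with hfr | hfreq
    · -- S component
      refine seair_slope_aux hx.1 (hS x hx0) hfS hfcx (fun hact => ?_) hfr
      have hSval : S x = -(f x) := by linarith
      have key : β * S x * (I x + ξ * A x) ≤ K * f x * N0 := by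
        rw [hKfN, hSval]
        nlinarith [mul_nonneg (mul_nonneg hβ.le hφ) (by nlinarith :
          (0:ℝ) ≤ (1 + ξ) * M + (I x + ξ * A x)),
          mul_nonneg (mul_nonneg (by linarith : (0:ℝ) ≤ σ + γA + γI) hφ) hN0.le]
      have hle : β * S x * (I x + ξ * A x) / N0 ≤ K * f x := by
        rw [div_le_iff₀ hN0]; exact key
      rw [hNx, neg_neg]; exact lt_of_le_of_lt hle hr
    rw [Filter.frequently_or_distrib] at hfreq
    rcases hfreq with hfr | hfreq
    · -- E component
      refine seair_slope_aux hx.1 (hE x hx0) hfE hfcx (fun hact => ?_) hfr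
      have hEval : E x = -(f x) := by linarith
      have key : -(β * S x * (I x + ξ * A x)) ≤ K * f x * N0 - σ * (f x) * N0 := by
        rw [hKfN]
        rcases le_or_gt 0 (I x + ξ * A x) with hc | hc
        · nlinarith [mul_nonneg (mul_nonneg hβ.le (by linarith : (0:ℝ) ≤ S x + f x)) hc,
            mul_nonneg (mul_nonneg (by linarith : (0:ℝ) ≤ γA + γI) hφ) hN0.le,
            mul_nonneg (mul_nonneg hβ.le hφ)
              (show (0:ℝ) ≤ (1 + ξ) * M - (I x + ξ * A x) by
                nlinarith [mul_nonneg hξ.le (by linarith : (0:ℝ) ≤ M - A x)])]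
        · nlinarith [mul_nonneg (mul_nonneg hβ.le (by linarith : (0:ℝ) ≤ M - S x))
            (by linarith : (0:ℝ) ≤ -(I x + ξ * A x)),
            mul_nonneg (mul_nonneg hβ.le hMpos.le)
            (show (0:ℝ) ≤ (1 + ξ) * (f x) + (I x + ξ * A x) by
              nlinarith [mul_nonneg hξ.le (by linarith : (0:ℝ) ≤ A x + f x)]),
            mul_nonneg (mul_nonneg (by linarith : (0:ℝ) ≤ γA + γI) hφ) hN0.le]
      have hdiv : -(β * S x * (I x + ξ * A x)) / N0 ≤ K * f x - σ * f x := by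
        rw [div_le_iff₀ hN0]; nlinarith [key]
      rw [hNx]
      have h2 : -(β * S x * (I x + ξ * A x) / N0 - σ * E x)
          = -(β * S x * (I x + ξ * A x)) / N0 + σ * E x := by ring
      rw [h2, hEval]
      have h3 : -(β * S x * (I x + ξ * A x)) / N0 + σ * -(f x) ≤ K * f x := by
        have h4 := mul_nonneg hσ.le hφ
        linarith [hdiv]
      exact lt_of_le_of_lt h3 hr
    rw [Filter.frequently_or_distrib] at hfreq
    rcases hfreq with hfr | hfreq
    · -- A component
      refine seair_slope_aux hx.1 (hA x hx0) hfA hfcx (fun hact => ?_) hfr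
      have hAval : A x = -(f x) := by linarith
      have hKB : 0 ≤ β * (1 + ξ) * M / N0 := by positivity
      have hKfx : (σ + γA + γI) * f x ≤ K * f x := by
        rw [hKdef]; linarith only [mul_nonneg hKB hφ]
      have h3 : -((1 - θ) * σ * E x - γA * A x) ≤ K * f x := by
        rw [hAval]
        nlinarith only [mul_nonneg (mul_nonneg (by linarith : (0:ℝ) ≤ 1 - θ) hσ.le)
          (by linarith only [hEx] : (0:ℝ) ≤ E x + f x),
          mul_nonneg hθ0 (mul_nonneg hσ.le hφ),
          mul_nonneg hγI.le hφ, hKfx, mul_nonneg hγA.le hφ]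
      exact lt_of_le_of_lt h3 hr
    rw [Filter.frequently_or_distrib] at hfreq
    rcases hfreq with hfr | hfr
    · -- I component
      refine seair_slope_aux hx.1 (hI x hx0) hfI hfcx (fun hact => ?_) hfr
      have hIval : I x = -(f x) := by linarith
      have hKB : 0 ≤ β * (1 + ξ) * M / N0 := by positivity
      have hKfx : (σ + γA + γI) * f x ≤ K * f x := by
        rw [hKdef]; linarith only [mul_nonneg hKB hφ]
      have h3 : -(θ * σ * E x - γI * I x) ≤ K * f x := by
        rw [hIval]
        nlinarith only [mul_nonneg (mul_nonneg hθ0 hσ.le)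
          (by linarith only [hEx] : (0:ℝ) ≤ E x + f x),
          mul_nonneg (mul_nonneg (by linarith : (0:ℝ) ≤ 1 - θ) hσ.le) hφ,
          mul_nonneg hγA.le hφ, mul_nonneg hγI.le hφ, hKfx]
      exact lt_of_le_of_lt h3 hr
    · -- R component
      refine seair_slope_aux hx.1 (hR x hx0) hfR hfcx (fun hact => ?_) hfr
      have hRval : R x = -(f x) := by linarith
      have hKB : 0 ≤ β * (1 + ξ) * M / N0 := by positivity
      have hKfx : (γA + γI) * f x ≤ K * f x := by
        rw [hKdef]; linarith only [mul_nonneg hσ.le hφ, mul_nonneg hKB hφ]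
      have h3 : -(γA * A x + γI * I x) ≤ K * f x := by
        nlinarith only [mul_nonneg hγA.le (by linarith only [hAx] : (0:ℝ) ≤ A x + f x),
          mul_nonneg hγI.le (by linarith only [hIx] : (0:ℝ) ≤ I x + f x),
          mul_nonneg hσ.le hφ, hKfx]
      exact lt_of_le_of_lt h3 hr
  have hbound : ∀ x ∈ Ico (0:ℝ) t₀, K * f x ≤ K * f x + 0 := by
    intro x hx; simp
  have hmain := le_gronwallBound_of_liminf_deriv_right_le hfcont hf' hfzero hbound
  have hend : f t₀ ≤ 0 := by
    have := hmain t₀ ⟨ht₀, le_rfl⟩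
    rwa [gronwallBound_ε0, zero_mul] at this
  exact ⟨by linarith [hfS t₀], by linarith [hfE t₀], by linarith [hfA t₀],
    by linarith [hfI t₀], by linarith [hfR t₀]⟩
end

section
/- For the SEAIR model without mobility, the basic reproduction number computed by the next-generation-matrix method equals R_0 = β(ξ(1−θ)/γ_A + θ/γ_I); explicitly, the spectral radius of F V^{-1} with F = [[0, βξ, β],[0,0,0],[0,0,0]] and V = [[σ,0,0],[−(1−θ)σ, γ_A, 0],[−θσ, 0, γ_I]] equals β(ξ(1−θ)/γ_A + θ/γ_I). -/
open Matrix

/-- The spectral radius of a real square matrix: the supremum of the moduli of its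
complex eigenvalues. -/
noncomputable def specRad {n : Type*} [Fintype n] [DecidableEq n]
    (A : Matrix n n ℝ) : ℝ :=
  sSup ((fun z : ℂ => ‖z‖) '' spectrum ℂ (A.map (Complex.ofReal)))

/-- For the single-city SEAIR model, the basic reproduction number computed by the
next-generation-matrix method is `R₀ = β (ξ(1−θ)/γ_A + θ/γ_I)`. -/
lemma spec_aux (r a b : ℂ) :
    spectrum ℂ (!![r,a,b;0,0,0;0,0,0] : Matrix (Fin 3) (Fin 3) ℂ) = {r, 0} := by
  ext z
  rw [spectrum.mem_iff, Matrix.isUnit_iff_isUnit_det]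
  have h1 : (algebraMap ℂ (Matrix (Fin 3) (Fin 3) ℂ)) z - !![r,a,b;0,0,0;0,0,0]
      = !![z-r,-a,-b;0,z,0;0,0,z] := by
    ext i j
    fin_cases i <;> fin_cases j <;>
      simp [Matrix.algebraMap_matrix_apply, Matrix.sub_apply, Matrix.vecHead, Matrix.vecTail]
  rw [h1]
  have hd : (!![z-r,-a,-b;0,z,0;0,0,z] : Matrix (Fin 3) (Fin 3) ℂ).det = (z - r) * z * z := by
    simp [Matrix.det_fin_three, Matrix.vecHead, Matrix.vecTail]
  rw [hd, isUnit_iff_ne_zero]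
  simp only [Set.mem_insert_iff, Set.mem_singleton_iff, ne_eq, not_not, mul_eq_zero, sub_eq_zero]
  tauto


/-- For the single-city SEAIR model -/
theorem seair_basic_reproduction_number
    (β ξ σ θ γA γI : ℝ) (hβ : 0 < β) (hξ : 0 < ξ) (hσ : 0 < σ)
    (hγA : 0 < γA) (hγI : 0 < γI) (hθ0 : 0 ≤ θ) (hθ1 : θ ≤ 1) :
    specRad ((!![0, β * ξ, β; 0, 0, 0; 0, 0, 0] : Matrix (Fin 3) (Fin 3) ℝ) *
        (!![σ, 0, 0; -(1 - θ) * σ, γA, 0; -θ * σ, 0, γI] : Matrix (Fin 3) (Fin 3) ℝ)⁻¹)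
      = β * (ξ * (1 - θ) / γA + θ / γI) := by
  set r : ℝ := β * (ξ * (1 - θ) / γA + θ / γI) with hr
  have hVinv : (!![σ, 0, 0; -(1 - θ) * σ, γA, 0; -θ * σ, 0, γI] : Matrix (Fin 3) (Fin 3) ℝ)⁻¹
      = !![1/σ, 0, 0; (1-θ)/γA, 1/γA, 0; θ/γI, 0, 1/γI] := by
    apply Matrix.inv_eq_right_inv
    ext i j
    fin_cases i <;> fin_cases j <;>
      simp [Matrix.mul_apply, Fin.sum_univ_three, Matrix.one_apply, Matrix.vecHead, Matrix.vecTail] <;>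
      field_simp <;> ring
  have hprod : (!![0, β * ξ, β; 0, 0, 0; 0, 0, 0] : Matrix (Fin 3) (Fin 3) ℝ) *
      (!![σ, 0, 0; -(1 - θ) * σ, γA, 0; -θ * σ, 0, γI] : Matrix (Fin 3) (Fin 3) ℝ)⁻¹
      = !![r, β * ξ / γA, β / γI; 0, 0, 0; 0, 0, 0] := by
    rw [hVinv]
    ext i j
    fin_cases i <;> fin_cases j <;>
      · simp [Matrix.mul_apply, Fin.sum_univ_three, Matrix.vecHead, Matrix.vecTail, hr]
        try ring
  rw [hprod]
  have hmap : (!![r, β * ξ / γA, β / γI; 0, 0, 0; 0, 0, 0] : Matrix (Fin 3) (Fin 3) ℝ).map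
      Complex.ofReal = !![(r:ℂ), (β * ξ / γA : ℝ), (β / γI : ℝ); 0, 0, 0; 0, 0, 0] := by
    ext i j
    fin_cases i <;> fin_cases j <;> simp [Matrix.vecHead, Matrix.vecTail]
  have hrpos : 0 < r := by
    rcases eq_or_lt_of_le hθ1 with h | h
    · have : r = β * (θ / γI) := by rw [hr, ← h]; ring
      rw [this, h]
      positivity
    · have h1 : 0 < 1 - θ := by linarith
      have : 0 < ξ * (1 - θ) / γA := by positivity
      have h2 : 0 ≤ θ / γI := by positivity
      rw [hr]; nlinarith
  rw [specRad, hmap, spec_aux]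
  have : (fun z : ℂ => ‖z‖) '' {(r:ℂ), 0} = {r, 0} := by
    rw [Set.image_pair]
    simp [Complex.norm_real, Real.norm_eq_abs, abs_of_pos hrpos]
  rw [this, csSup_pair]
  exact max_eq_left hrpos.le
end

section
/- For the linear subsystem E' = βξA + βI − σE, A' = (1−θ)σE − γ_A A, I' = θσE − γ_I I (the linearization of the SEAIR model at the disease-free equilibrium with S/N = 1), if R_0 = β(ξ(1−θ)/γ_A + θ/γ_I) < 1 then all eigenvalues of the coefficient matrix have negative real part. -/
open Matrix

/-- If `R₀ = β(ξ(1−θ)/γ_A + θ/γ_I) < 1`, then all eigenvalues of the linearization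
`J = [[−σ, βξ, β],[(1−θ)σ, −γ_A, 0],[θσ, 0, −γ_I]]` of the SEAIR model at the
disease-free equilibrium have negative real part. -/
theorem dfe_linearization_stable (β ξ σ θ γA γI : ℝ)
    (hβ : 0 < β) (hξ : 0 < ξ) (hσ : 0 < σ) (hγA : 0 < γA) (hγI : 0 < γI)
    (hθ0 : 0 ≤ θ) (hθ1 : θ ≤ 1)
    (hR0 : β * (ξ * (1 - θ) / γA + θ / γI) < 1) :
    ∀ μ : ℂ, μ ∈ spectrum ℂ
      ((!![-σ, β * ξ, β; (1 - θ) * σ, -γA, 0; θ * σ, 0, -γI] :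
          Matrix (Fin 3) (Fin 3) ℝ).map (Complex.ofReal)) →
      μ.re < 0 := by
  intro μ hμ
  by_contra hre
  push_neg at hre
  rw [spectrum.mem_iff, Matrix.isUnit_iff_isUnit_det, isUnit_iff_ne_zero, not_not] at hμ
  simp [Matrix.det_fin_three, Matrix.algebraMap_matrix_apply] at hμ
  have key : (μ + σ) * (μ + γA) * (μ + γI)
      = (β : ℂ) * σ * (ξ * (1 - θ) * (μ + γI) + θ * (μ + γA)) := by
    linear_combination hμ
  set S := ‖μ + σ‖ with hS
  set A := ‖μ + γA‖ with hA
  set I := ‖μ + γI‖ with hI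
  have hSσ : σ ≤ S := by
    calc σ ≤ (μ + σ).re := by simp; linarith
    _ ≤ S := Complex.re_le_norm _
  have hAγ : γA ≤ A := by
    calc γA ≤ (μ + γA).re := by simp; linarith
    _ ≤ A := Complex.re_le_norm _
  have hIγ : γI ≤ I := by
    calc γI ≤ (μ + γI).re := by simp; linarith
    _ ≤ I := Complex.re_le_norm _
  have habs : S * A * I ≤ β * σ * (ξ * (1 - θ) * I + θ * A) := by
    have h1 : S * A * I = ‖(β : ℂ) * σ * (ξ * (1 - θ) * (μ + γI) + θ * (μ + γA))‖ := by
      rw [hS, hA, hI, ← norm_mul, ← norm_mul, key]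
    rw [h1]
    have h2 : ‖(ξ : ℂ) * (1 - θ) * (μ + γI) + θ * (μ + γA)‖
        ≤ ξ * (1 - θ) * I + θ * A := by
      refine (norm_add_le _ _).trans ?_
      rw [norm_mul, norm_mul, norm_mul]
      have e1 : ‖(ξ : ℂ)‖ = ξ := by
        rw [Complex.norm_real, Real.norm_eq_abs]; exact abs_of_pos hξ
      have e2 : ‖(1 : ℂ) - θ‖ = 1 - θ := by
        rw [show ((1 : ℂ) - θ) = ((1 - θ : ℝ) : ℂ) by push_cast; ring,
          Complex.norm_real, Real.norm_eq_abs]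
        exact abs_of_nonneg (by linarith)
      have e3 : ‖(θ : ℂ)‖ = θ := by
        rw [Complex.norm_real, Real.norm_eq_abs]; exact abs_of_nonneg hθ0
      rw [e1, e2, e3, hI, hA]
    calc ‖(β : ℂ) * σ * (ξ * (1 - θ) * (μ + γI) + θ * (μ + γA))‖
        = β * σ * ‖(ξ : ℂ) * (1 - θ) * (μ + γI) + θ * (μ + γA)‖ := by
          rw [norm_mul, norm_mul, Complex.norm_real, Complex.norm_real, Real.norm_eq_abs, Real.norm_eq_abs,
            abs_of_pos hβ, abs_of_pos hσ]
      _ ≤ β * σ * (ξ * (1 - θ) * I + θ * A) := by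
          apply mul_le_mul_of_nonneg_left h2 (by positivity)
  have hR0' : β * (ξ * (1 - θ) * γI + θ * γA) < γA * γI := by
    have h := mul_lt_mul_of_pos_right hR0 (mul_pos hγA hγI)
    rw [one_mul] at h
    calc β * (ξ * (1 - θ) * γI + θ * γA)
        = β * (ξ * (1 - θ) / γA + θ / γI) * (γA * γI) := by
          field_simp
      _ < γA * γI := h
  -- positivity facts
  have hApos : 0 < A := lt_of_lt_of_le hγA hAγ
  have hIpos : 0 < I := lt_of_lt_of_le hγI hIγ
  have h1θ : 0 ≤ 1 - θ := by linarith
  have hAI : A * I ≤ β * (ξ * (1 - θ) * I + θ * A) := by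
    have hs : σ * (A * I) ≤ S * A * I := by
      have := mul_le_mul_of_nonneg_right hSσ (le_of_lt (mul_pos hApos hIpos))
      linarith [this]
    nlinarith [hs, habs]
  -- final contradiction
  nlinarith [mul_le_mul_of_nonneg_right hAI (le_of_lt (mul_pos hγA hγI)),
    mul_lt_mul_of_pos_right hR0' (mul_pos hApos hIpos),
    mul_le_mul_of_nonneg_left hAγ (mul_nonneg (mul_nonneg hβ.le (mul_nonneg hξ.le h1θ)) hIpos.le),
    mul_le_mul_of_nonneg_left hIγ (mul_nonneg (mul_nonneg hβ.le hθ0) hApos.le),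
    mul_pos hApos hIpos, mul_pos hγA hγI]
end
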